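/- Suppose S ∈ {±(1/√2)·((1, ε),(ε, −1)) : ε = ±1} ∪ {±(1/√(2+a))·((1, a),(a, −1)) : a² = 1 + a}, and suppose S fixes a nonzero vector (v₀, v₁) ∈ ℝ² with v₀ > 0 and v₁ > 0. Then S is one of the four matrices: (1/√2)((1,1),(1,−1)), (1/√2)((−1,1),(1,1)), (1/√(2+φ))((1,φ),(φ,−1)), (1/√(3−φ))((−1,φ−1),(φ−1,1)), where φ = (1+√5)/2. -/
import Mathlib


noncomputable def φ : ℝ := (1 + Real.sqrt 5) / 2

theorem stmt_17 (S : Matrix (Fin 2) (Fin 2) ℝ)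
    (hS : (∃ ε : ℝ, ε ^ 2 = 1 ∧
            (S = (1 / Real.sqrt 2) • !![1, ε; ε, -1] ∨
             S = -((1 / Real.sqrt 2) • !![1, ε; ε, -1]))) ∨
          (∃ a : ℝ, a ^ 2 = 1 + a ∧
            (S = (1 / Real.sqrt (2 + a)) • !![1, a; a, -1] ∨
             S = -((1 / Real.sqrt (2 + a)) • !![1, a; a, -1]))))
    (v₀ v₁ : ℝ) (hv₀ : 0 < v₀) (hv₁ : 0 < v₁)
    (hfix : S.mulVec ![v₀, v₁] = ![v₀, v₁]) :
    S = (1 / Real.sqrt 2) • !![1, 1; 1, -1] ∨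
    S = (1 / Real.sqrt 2) • !![-1, 1; 1, 1] ∨
    S = (1 / Real.sqrt (2 + φ)) • !![1, φ; φ, -1] ∨
    S = (1 / Real.sqrt (3 - φ)) • !![-1, φ - 1; φ - 1, 1] := by
  have h2 : (0:ℝ) < Real.sqrt 2 := Real.sqrt_pos.2 (by norm_num)
  have h5 : Real.sqrt 5 ^ 2 = 5 := Real.sq_sqrt (by norm_num)
  have h5n : (0:ℝ) ≤ Real.sqrt 5 := Real.sqrt_nonneg 5
  have hφ2 : φ ^ 2 = 1 + φ := by unfold φ; nlinarith [h5]
  have hφ1 : 1 < φ := by unfold φ; nlinarith [h5]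
  have h0 := congrFun hfix 0
  have h1 := congrFun hfix 1
  obtain ⟨ε, hε, hc | hc⟩ | ⟨a, ha, hc | hc⟩ := hS
  · have hε' : (ε - 1) * (ε + 1) = 0 := by nlinarith
    rcases mul_eq_zero.1 hε' with h | h
    · left
      rw [hc]; congr 2; rw [show ε = 1 by linarith]
    · exfalso
      have hε1 : ε = -1 := by linarith
      subst hε1 hc
      simp [Matrix.mulVec, dotProduct, Fin.sum_univ_two] at h1
      have hinv : (0:ℝ) < (Real.sqrt 2)⁻¹ := inv_pos.2 h2
      nlinarith [mul_pos hinv hv₀, mul_pos hinv hv₁]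
  · have hε' : (ε - 1) * (ε + 1) = 0 := by nlinarith
    rcases mul_eq_zero.1 hε' with h | h
    · exfalso
      have hε1 : ε = 1 := by linarith
      subst hε1 hc
      simp [Matrix.mulVec, dotProduct, Fin.sum_univ_two] at h0
      have hinv : (0:ℝ) < (Real.sqrt 2)⁻¹ := inv_pos.2 h2
      nlinarith [mul_pos hinv hv₀, mul_pos hinv hv₁]
    · right; left
      have hε1 : ε = -1 := by linarith
      subst hε1 hc
      ext i j
      fin_cases i <;> fin_cases j <;>
        simp [Matrix.smul_apply] <;> ring
  · have hfac : (a - φ) * (a - (1 - φ)) = 0 := by linear_combination ha - hφ2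
    rcases mul_eq_zero.1 hfac with h | h
    · right; right; left
      rw [hc, show a = φ by linarith]
    · exfalso
      have ha1 : a = 1 - φ := by linarith
      subst ha1 hc
      have hs : (0:ℝ) < Real.sqrt (2 + (1 - φ)) :=
        Real.sqrt_pos.2 (by nlinarith [hφ2, hφ1])
      have hinv : (0:ℝ) < (Real.sqrt (2 + (1 - φ)))⁻¹ := inv_pos.2 hs
      simp [Matrix.mulVec, dotProduct, Fin.sum_univ_two] at h1
      nlinarith [mul_pos hinv hv₁,
        mul_pos hinv (mul_pos (show (0:ℝ) < φ - 1 by linarith) hv₀)]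
  · have hfac : (a - φ) * (a - (1 - φ)) = 0 := by linear_combination ha - hφ2
    rcases mul_eq_zero.1 hfac with h | h
    · exfalso
      have ha1 : a = φ := by linarith
      subst ha1 hc
      have hs : (0:ℝ) < Real.sqrt (2 + φ) := Real.sqrt_pos.2 (by linarith)
      have hinv : (0:ℝ) < (Real.sqrt (2 + φ))⁻¹ := inv_pos.2 hs
      simp [Matrix.mulVec, dotProduct, Fin.sum_univ_two] at h0
      nlinarith [mul_pos hinv hv₀,
        mul_pos hinv (mul_pos (show (0:ℝ) < φ by linarith) hv₁)]
    · right; right; right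
      have ha1 : a = 1 - φ := by linarith
      subst ha1 hc
      have hrw : (2:ℝ) + (1 - φ) = 3 - φ := by ring
      rw [hrw]
      ext i j
      fin_cases i <;> fin_cases j <;>
        simp [Matrix.smul_apply] <;> ring
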